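/- arXiv:1308.5382 — 8 statements merged into one kernel-verified Lean document; each statement's English description precedes it below -/
import Mathlib

section
/- Let Γ be a finite semigroup with at least two elements and let V be a proper subsemigroup of Γ of the largest possible cardinality among proper subsemigroups. Then the large rank of Γ satisfies r₅(Γ) = |V| + 1. -/
namespace Subsemigroup

variable {M : Type*} [Mul M]

theorem closure_eq_top_of_ncard_lt [Finite M] {n : ℕ}
    (hproper : ∀ W : Subsemigroup M, W ≠ ⊤ → (W : Set M).ncard ≤ n)
    {s : Set M} (hs : n < s.ncard) : closure s = ⊤ := by
  by_contra hne
  have hsub : s.ncard ≤ (closure s : Set M).ncard := Set.ncard_le_ncard subset_closure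
  exact (hs.trans_le hsub).not_ge (hproper _ hne)

theorem exists_finset_card_eq_closure_le (V : Subsemigroup M) (hV : (V : Set M).Finite)
    {k : ℕ} (hk : k ≤ (V : Set M).ncard) :
    ∃ t : Finset M, t.card = k ∧ closure (t : Set M) ≤ V := by
  obtain ⟨t, htV, rfl⟩ := Set.exists_subset_card_eq hk
  have ht : t.Finite := hV.subset htV
  refine ⟨ht.toFinset, (Set.ncard_eq_toFinset_card t ht).symm, ?_⟩
  simpa only [Set.Finite.coe_toFinset] using closure_le.mpr htV

end Subsemigroup

theorem largeRank_eq_card_largest_proper_subsemigroup_add_one_general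
    {Γ : Type*} [Semigroup Γ] [Fintype Γ]
    (V : Subsemigroup Γ) (hV : V ≠ ⊤)
    (hmax : ∀ W : Subsemigroup Γ, W ≠ ⊤ → (W : Set Γ).ncard ≤ (V : Set Γ).ncard) :
    IsLeast {k : ℕ | ∀ U : Finset Γ, U.card = k → Subsemigroup.closure (U : Set Γ) = ⊤}
      ((V : Set Γ).ncard + 1) := by
  constructor
  · intro U hU
    exact Subsemigroup.closure_eq_top_of_ncard_lt hmax (by rw [Set.ncard_coe_finset, hU]; omega)
  · intro k hk
    by_contra! hlt
    obtain ⟨t, rfl, hle⟩ :=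
      V.exists_finset_card_eq_closure_le (Set.toFinite _) (Nat.lt_add_one_iff.mp hlt)
    exact hV (top_le_iff.mp (hk t rfl ▸ hle))

/-- **Howie–Ribeiro.** If `V` is a proper subsemigroup of a finite semigroup `Γ`
(with at least two elements) of the largest possible cardinality among proper
subsemigroups, then the large rank `r₅(Γ)` — the least `k` such that every subset
of `Γ` of cardinality `k` generates `Γ` — equals `|V| + 1`. -/
theorem largeRank_eq_card_largest_proper_subsemigroup_add_one
    {Γ : Type*} [Semigroup Γ] [Fintype Γ] [Nontrivial Γ]
    (V : Subsemigroup Γ) (hV : V ≠ ⊤)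
    (hmax : ∀ W : Subsemigroup Γ, W ≠ ⊤ → (W : Set Γ).ncard ≤ (V : Set Γ).ncard) :
    IsLeast {k : ℕ | ∀ U : Finset Γ, U.card = k → Subsemigroup.closure (U : Set Γ) = ⊤}
      ((V : Set Γ).ncard + 1) :=
  largeRank_eq_card_largest_proper_subsemigroup_add_one_general V hV hmax
end

section
/- Let Γ be a finite semigroup and let V be a nonempty proper prime subset of Γ of the smallest possible cardinality among nonempty proper prime subsets. Then the large rank of Γ satisfies r₅(Γ) = |Γ \ V| + 1, i.e., r₅(Γ) = |Γ| − |V| + 1. -/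
/-- A nonempty subset `U` of a (multiplicative) semigroup is *prime* if
`a * b ∈ U` implies `a ∈ U` or `b ∈ U`. -/
def IsPrimeSubset {Γ : Type*} [Mul Γ] (U : Set Γ) : Prop :=
  U.Nonempty ∧ ∀ a b : Γ, a * b ∈ U → a ∈ U ∨ b ∈ U

/-!
Prime subsets are exactly the complements of proper subsemigroups. A set that does not
generate `Γ` lies in a proper subsemigroup `T`, whose complement is prime, so by minimality
`|T| ≤ |Γ \ V|`; hence every set with more than `|Γ \ V|` elements generates. Conversely the
complement of `V` is itself a proper subsemigroup, so no subset of it generates.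
-/

section Prime

variable {Γ : Type*} [Mul Γ]

def IsPrimeSubset.complSubsemigroup {V : Set Γ} (hV : IsPrimeSubset V) : Subsemigroup Γ where
  carrier := Vᶜ
  mul_mem' {a b} ha hb hab := (hV.2 a b hab).elim ha hb

theorem IsPrimeSubset.complSubsemigroup_ne_top {V : Set Γ} (hV : IsPrimeSubset V) :
    hV.complSubsemigroup ≠ ⊤ := by
  obtain ⟨v, hv⟩ := hV.1
  exact fun h => (h ▸ Subsemigroup.mem_top v : v ∈ hV.complSubsemigroup) hv

theorem Subsemigroup.isPrimeSubset_compl {T : Subsemigroup Γ} (hT : T ≠ ⊤) :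
    IsPrimeSubset (T : Set Γ)ᶜ := by
  refine ⟨?_, fun a b hab => ?_⟩
  · obtain ⟨x, hx⟩ := (SetLike.lt_iff_le_and_exists.mp (lt_top_iff_ne_top.mpr hT)).2
    exact ⟨x, hx.2⟩
  · by_contra! h
    exact hab (T.mul_mem (not_not.mp h.1) (not_not.mp h.2))

end Prime

section LargeRank

variable {Γ : Type*} [Mul Γ] [Finite Γ] {V : Set Γ}

theorem closure_eq_top_of_ncard_compl_lt
    (hmin : ∀ U : Set Γ, U.Nonempty → U ≠ Set.univ → IsPrimeSubset U → V.ncard ≤ U.ncard)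
    {U : Finset Γ} (hU : Vᶜ.ncard < U.card) : Subsemigroup.closure (U : Set Γ) = ⊤ := by
  by_contra hT
  set T := Subsemigroup.closure (U : Set Γ)
  have hUT : (U : Set Γ) ⊆ T := Subsemigroup.subset_closure
  obtain ⟨u, hu⟩ : U.Nonempty := Finset.card_pos.mp (by omega)
  have hprime := Subsemigroup.isPrimeSubset_compl hT
  have hproper : (T : Set Γ)ᶜ ≠ Set.univ := fun h =>
    (h.symm ▸ Set.mem_univ u : u ∈ (T : Set Γ)ᶜ) (hUT hu)
  have hV := hmin _ hprime.1 hproper hprime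
  have hUcard : U.card ≤ (T : Set Γ).ncard := by
    simpa only [Set.ncard_coe_finset] using Set.ncard_le_ncard hUT
  have := Set.ncard_add_ncard_compl V
  have := Set.ncard_add_ncard_compl (T : Set Γ)
  omega

theorem IsPrimeSubset.exists_card_eq_closure_ne_top (hV : IsPrimeSubset V) {k : ℕ}
    (hk : k ≤ Vᶜ.ncard) : ∃ U : Finset Γ, U.card = k ∧ Subsemigroup.closure (U : Set Γ) ≠ ⊤ := by
  have := Fintype.ofFinite Γ
  classical
  rw [Set.ncard_eq_toFinset_card'] at hk
  obtain ⟨U, hUV, rfl⟩ := Finset.exists_subset_card_eq hk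
  refine ⟨U, rfl, ne_top_of_le_ne_top hV.complSubsemigroup_ne_top ?_⟩
  exact Subsemigroup.closure_le.mpr fun x hx => (Set.mem_toFinset.mp (hUV hx) : x ∈ Vᶜ)

end LargeRank

theorem largeRank_eq_card_compl_smallest_prime_add_one_general
    {Γ : Type*} [Semigroup Γ] [Fintype Γ]
    (V : Set Γ) (hp : IsPrimeSubset V)
    (hmin : ∀ U : Set Γ, U.Nonempty → U ≠ Set.univ → IsPrimeSubset U → V.ncard ≤ U.ncard) :
    IsLeast {k : ℕ | ∀ U : Finset Γ, U.card = k → Subsemigroup.closure (U : Set Γ) = ⊤}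
      (Vᶜ.ncard + 1) := by
  refine ⟨fun U hU => closure_eq_top_of_ncard_compl_lt hmin (by omega), fun k hk => ?_⟩
  by_contra! hlt
  obtain ⟨U, hU, hne⟩ := hp.exists_card_eq_closure_ne_top (Nat.le_of_lt_succ hlt)
  exact hne (hk U hU)

/-- If `V` is a nonempty proper prime subset of a finite semigroup `Γ` of the smallest
possible cardinality among nonempty proper prime subsets, then the large rank `r₅(Γ)`
— the least `k` such that every subset of `Γ` of cardinality `k` generates `Γ` —
equals `|Γ \ V| + 1`. -/
theorem largeRank_eq_card_compl_smallest_prime_add_one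
    {Γ : Type*} [Semigroup Γ] [Fintype Γ]
    (V : Set Γ) (h1 : V.Nonempty) (h2 : V ≠ Set.univ) (hp : IsPrimeSubset V)
    (hmin : ∀ U : Set Γ, U.Nonempty → U ≠ Set.univ → IsPrimeSubset U → V.ncard ≤ U.ncard) :
    IsLeast {k : ℕ | ∀ U : Finset Γ, U.card = k → Subsemigroup.closure (U : Set Γ) = ⊤}
      (Vᶜ.ncard + 1) :=
  largeRank_eq_card_compl_smallest_prime_add_one_general V hp hmin
end

section
/- For every finite group G and every integer n ≥ 2, the large rank of the Brandt semigroup B(G, n) is r₅(B(G, n)) = (n² − n + 1)·|G| + 2. -/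
/-- The Brandt semigroup `B(G, n)` over a group `G`: underlying set
`([n] × G × [n]) ∪ {0}`, encoded as `Option (Fin n × G × Fin n)` with `none`
playing the role of the zero element `0`. -/
def Brandt (G : Type*) (n : ℕ) : Type _ := Option (Fin n × G × Fin n)

namespace Brandt

/-- The zero element `0` of the Brandt semigroup. -/
def zero {G : Type*} {n : ℕ} : Brandt G n := none

/-- The element `(i, a, j)` of the Brandt semigroup. -/
def elem {G : Type*} {n : ℕ} (i : Fin n) (a : G) (j : Fin n) : Brandt G n := some (i, a, j)

/-- Multiplication: `(i, a, j)(k, b, l) = (i, ab, l)` if `j = k` and `0` otherwise,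
with `0` acting as a zero element. -/
def mul {G : Type*} [Group G] {n : ℕ} : Brandt G n → Brandt G n → Brandt G n
  | none, _ => none
  | some _, none => none
  | some (i, a, j), some (k, b, l) => if j = k then some (i, a * b, l) else none

instance (G : Type*) [Group G] (n : ℕ) : Semigroup (Brandt G n) where
  mul := mul
  mul_assoc x y z := by
    show mul (mul x y) z = mul x (mul y z)
    rcases x with _ | ⟨i, a, j⟩ <;> rcases y with _ | ⟨k, b, l⟩ <;> rcases z with _ | ⟨m, c, p⟩ <;>
      simp only [mul]
    all_goals first
      | rfl
      | (by_cases h1 : j = k <;> by_cases h2 : l = m <;> simp [mul, h1, h2, mul_assoc] <;> rfl)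
      | (by_cases h1 : j = k <;> simp [mul, h1] <;> rfl)
      | (split_ifs <;> simp_all [mul, mul_assoc])

instance (G : Type*) [Fintype G] (n : ℕ) : Fintype (Brandt G n) :=
  inferInstanceAs (Fintype (Option (Fin n × G × Fin n)))

instance (G : Type*) [DecidableEq G] (n : ℕ) : DecidableEq (Brandt G n) :=
  inferInstanceAs (DecidableEq (Option (Fin n × G × Fin n)))

end Brandt

/-!
A proper subsemigroup `S` of `B(G, n)` misses at least `(n - 1)|G|` elements. If some
`(i, a, j) ∉ S`, then since `(i, a, j) = (i, x, k)(k, x⁻¹a, j)`, for each `k ≠ j` and `x ∈ G` one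
of these two factors lies outside `S`, and the `(n - 1)|G|` pairs are pairwise disjoint. If
`0 ∉ S`, then no `(k, x, j)` with `k ≠ j` lies in `S`, as its square is `0`. The bound is attained
by the subsemigroup of all elements except the `(i, a, j)` with `i ≠ j` (for a fixed `j`), so the
largest proper subsemigroups have `(n² - n + 1)|G| + 1` elements, and the large rank is one more.
-/

open Function

section LargeRank

variable {M : Type*} [Semigroup M] [Finite M]

theorem Subsemigroup.isLeast_card_closure_eq_top {m : ℕ}
    (hle : ∀ S : Subsemigroup M, S ≠ ⊤ → (S : Set M).ncard ≤ m)
    (hex : ∃ S : Subsemigroup M, S ≠ ⊤ ∧ m ≤ (S : Set M).ncard) :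
    IsLeast {k : ℕ | ∀ U : Finset M, U.card = k → Subsemigroup.closure (U : Set M) = ⊤}
      (m + 1) := by
  constructor
  · intro U hU
    by_contra hne
    have : U.card ≤ m := by
      rw [← Set.ncard_coe_finset]
      exact (Set.ncard_le_ncard Subsemigroup.subset_closure).trans (hle _ hne)
    omega
  · intro k hk
    obtain ⟨S, hS, hmS⟩ := hex
    by_contra! hlt
    obtain ⟨t, htS, htk⟩ := Set.exists_subset_card_eq (s := (S : Set M)) (n := k) (by omega)
    lift t to Finset M using t.toFinite
    refine hS (top_le_iff.mp ?_)
    rw [← hk t (by simpa using htk)]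
    exact Subsemigroup.closure_le.mpr htS

end LargeRank

theorem sq_sub_add_one_mul_add_sub_one_mul {n : ℕ} (hn : 1 ≤ n) (N : ℕ) :
    (n ^ 2 - n + 1) * N + (n - 1) * N = n ^ 2 * N := by
  rw [← add_mul]
  have := Nat.le_self_pow two_ne_zero n
  congr 1
  omega

namespace Brandt

variable {G : Type*} {n : ℕ}

@[elab_as_elim]
theorem induction {motive : Brandt G n → Prop} (zero : motive zero)
    (elem : ∀ i a j, motive (elem i a j)) (x : Brandt G n) : motive x := by
  rcases x with _ | ⟨i, a, j⟩
  exacts [zero, elem i a j]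

theorem elem_inj {i i' j j' : Fin n} {a a' : G} :
    elem i a j = elem i' a' j' ↔ i = i' ∧ a = a' ∧ j = j' := by
  simp [elem, Brandt]

theorem elem_column_injective (j : Fin n) :
    Injective fun p : {k // k ≠ j} × G => elem (p.1 : Fin n) p.2 j := by
  intro p q h
  obtain ⟨hk, hx, -⟩ := elem_inj.mp h
  exact Prod.ext (Subtype.ext hk) hx

@[simp]
theorem elem_ne_zero (i : Fin n) (a : G) (j : Fin n) : elem i a j ≠ zero := by
  simp [elem, zero, Brandt]

theorem card [Fintype G] : Nat.card (Brandt G n) = n ^ 2 * Fintype.card G + 1 := by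
  simp [Brandt, Nat.card_eq_fintype_card]
  ring

variable [Group G]

@[simp]
theorem zero_mul (x : Brandt G n) : zero * x = zero := rfl

@[simp]
theorem mul_zero (x : Brandt G n) : x * zero = zero := by
  induction x using Brandt.induction <;> rfl

theorem elem_mul_elem (i : Fin n) (a : G) (j k : Fin n) (b : G) (l : Fin n) :
    elem i a j * elem k b l = if j = k then elem i (a * b) l else zero := rfl

theorem elem_mul_elem_inv_mul (i : Fin n) (a : G) (j : Fin n) (b : G) (l : Fin n) :
    elem i a j * elem j (a⁻¹ * b) l = elem i b l := by
  simp [elem_mul_elem]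

theorem exists_injective_notMem_of_elem_notMem {S : Subsemigroup (Brandt G n)} {i j : Fin n}
    {a : G} (h : elem i a j ∉ S) :
    ∃ f : {k // k ≠ j} × G → Brandt G n, Injective f ∧ ∀ p, f p ∉ S := by
  classical
  refine ⟨fun p => if elem i p.2 p.1 ∈ S then elem p.1 (p.2⁻¹ * a) j else elem i p.2 p.1,
    ?_, fun ⟨k, x⟩ hmem => ?_⟩
  · rintro ⟨⟨k, hk⟩, x⟩ ⟨⟨k', hk'⟩, x'⟩ heq
    dsimp only at heq
    split_ifs at heq
    · obtain ⟨rfl, hx, -⟩ := elem_inj.mp heq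
      rw [mul_left_inj, inv_inj] at hx
      rw [hx]
    · exact absurd (elem_inj.mp heq).2.2.symm hk'
    · exact absurd (elem_inj.mp heq).2.2 hk
    · obtain ⟨-, rfl, rfl⟩ := elem_inj.mp heq
      rfl
  · dsimp only at hmem
    split_ifs at hmem with hx
    · exact h (elem_mul_elem_inv_mul i x k a j ▸ S.mul_mem hx hmem)
    · exact hx hmem

theorem exists_injective_notMem_of_zero_notMem {S : Subsemigroup (Brandt G n)} (h0 : zero ∉ S)
    (j : Fin n) : ∃ f : {k // k ≠ j} × G → Brandt G n, Injective f ∧ ∀ p, f p ∉ S := by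
  refine ⟨_, elem_column_injective j, fun ⟨⟨k, hk⟩, x⟩ hmem => h0 ?_⟩
  simpa [elem_mul_elem, Ne.symm hk] using S.mul_mem hmem hmem

section Counting

variable [Fintype G]

theorem le_ncard_compl_of_injective {S : Subsemigroup (Brandt G n)} {j : Fin n}
    {f : {k // k ≠ j} × G → Brandt G n} (hf : Injective f) (hfS : ∀ p, f p ∉ S) :
    (n - 1) * Fintype.card G ≤ (S : Set (Brandt G n))ᶜ.ncard := by
  rw [← Nat.card_coe_set_eq]
  calc (n - 1) * Fintype.card G = Nat.card ({k // k ≠ j} × G) := by simp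
    _ ≤ _ := Nat.card_le_card_of_injective (fun p => ⟨f p, hfS p⟩)
      fun p q h => hf (congrArg Subtype.val h)

theorem le_ncard_compl [NeZero n] {S : Subsemigroup (Brandt G n)} (hS : S ≠ ⊤) :
    (n - 1) * Fintype.card G ≤ (S : Set (Brandt G n))ᶜ.ncard := by
  by_cases h0 : zero ∈ S
  · obtain ⟨x, hx⟩ := SetLike.exists_not_mem_of_ne_top S hS
    induction x using Brandt.induction with
    | zero => exact absurd h0 hx
    | elem i a j =>
      obtain ⟨f, hf, hfS⟩ := exists_injective_notMem_of_elem_notMem hx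
      exact le_ncard_compl_of_injective hf hfS
  · obtain ⟨f, hf, hfS⟩ := exists_injective_notMem_of_zero_notMem h0 0
    exact le_ncard_compl_of_injective hf hfS

theorem ncard_le_of_ne_top [NeZero n] {S : Subsemigroup (Brandt G n)} (hS : S ≠ ⊤) :
    (S : Set (Brandt G n)).ncard ≤ (n ^ 2 - n + 1) * Fintype.card G + 1 := by
  have hsum := Set.ncard_add_ncard_compl (S : Set (Brandt G n))
  have hcompl := le_ncard_compl hS
  have := sq_sub_add_one_mul_add_sub_one_mul (NeZero.one_le (n := n)) (Fintype.card G)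
  rw [card] at hsum
  omega

end Counting

variable (G) in
def avoidColumn (j : Fin n) : Subsemigroup (Brandt G n) where
  carrier := {x | ∀ i a, x = elem i a j → i = j}
  mul_mem' {x y} hx hy i c hxy := by
    induction x using Brandt.induction with
    | zero => exact (elem_ne_zero i c j (hxy.symm.trans (zero_mul y))).elim
    | elem i' a k =>
      induction y using Brandt.induction with
      | zero => exact (elem_ne_zero i c j (hxy.symm.trans (mul_zero _))).elim
      | elem k' b l =>
        rw [elem_mul_elem] at hxy
        split_ifs at hxy with hkk
        · subst hkk
          obtain ⟨rfl, -, rfl⟩ := elem_inj.mp hxy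
          obtain rfl := hy _ b rfl
          exact hx _ a rfl
        · exact absurd hxy.symm (elem_ne_zero _ _ _)

theorem mem_avoidColumn {j : Fin n} {x : Brandt G n} :
    x ∈ avoidColumn G j ↔ ∀ i a, x = elem i a j → i = j := Iff.rfl

theorem compl_avoidColumn (j : Fin n) :
    (avoidColumn G j : Set (Brandt G n))ᶜ =
      Set.range fun p : {i // i ≠ j} × G => elem (p.1 : Fin n) p.2 j := by
  ext x
  simp only [Set.mem_compl_iff, SetLike.mem_coe, mem_avoidColumn, Set.mem_range, Prod.exists,
    Subtype.exists, not_forall, exists_prop]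
  constructor
  · rintro ⟨i, a, rfl, hi⟩
    exact ⟨i, hi, a, rfl⟩
  · rintro ⟨i, hi, a, rfl⟩
    exact ⟨i, a, rfl, hi⟩

theorem avoidColumn_ne_top (hn : 2 ≤ n) (j : Fin n) : avoidColumn G j ≠ ⊤ := by
  have := Fin.nontrivial_iff_two_le.mpr hn
  obtain ⟨i, hi⟩ := exists_ne j
  intro h
  have hmem : elem i (1 : G) j ∈ avoidColumn G j := h ▸ Subsemigroup.mem_top _
  exact hi (hmem i 1 rfl)

theorem ncard_avoidColumn [Fintype G] (j : Fin n) :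
    (avoidColumn G j : Set (Brandt G n)).ncard = (n ^ 2 - n + 1) * Fintype.card G + 1 := by
  have hsum := Set.ncard_add_ncard_compl (avoidColumn G j : Set (Brandt G n))
  have hcompl : Nat.card ({k // k ≠ j} × G) = (n - 1) * Fintype.card G := by simp
  rw [compl_avoidColumn, Set.ncard_range_of_injective (elem_column_injective j), hcompl, card]
    at hsum
  have := sq_sub_add_one_mul_add_sub_one_mul (Nat.one_le_of_lt j.pos) (Fintype.card G)
  omega

end Brandt

/-- **Howie–Ribeiro.** For every finite group `G` and every `n ≥ 2`, the large rank of
the Brandt semigroup `B(G, n)` — the least `k` such that every subset of cardinality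
`k` generates `B(G, n)` — equals `(n² - n + 1)|G| + 2`. -/
theorem largeRank_brandt {G : Type*} [Group G] [Fintype G] (n : ℕ) (hn : 2 ≤ n) :
    IsLeast {k : ℕ | ∀ U : Finset (Brandt G n), U.card = k →
        Subsemigroup.closure (U : Set (Brandt G n)) = ⊤}
      ((n ^ 2 - n + 1) * Fintype.card G + 2) := by
  have : NeZero n := ⟨by omega⟩
  exact Subsemigroup.isLeast_card_closure_eq_top (fun _ => Brandt.ncard_le_of_ne_top)
    ⟨Brandt.avoidColumn G 0, Brandt.avoidColumn_ne_top hn 0, (Brandt.ncard_avoidColumn 0).ge⟩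
end

section
/- Let n ≥ 3, p, r ∈ [n − 1] and q, s ∈ [n]. The product ζ_{(p, q)} ζ_{(r, s)} in 𝒪_n lies in J_{n−1} (i.e., its image has cardinality n − 1) if and only if q ∈ {r, r + 1}; and in that case ζ_{(p, q)} ζ_{(r, s)} = ζ_{(p, s)}. -/
/-
An order-preserving map of a finite chain is determined by its kernel and its image.
If `q ∈ {r, r + 1}`, the point `q` missing from the image of `ζ_{(p,q)}` is glued by
`ζ_{(r,s)}` to its neighbour, so the product has the kernel of `ζ_{(p,q)}` and the image
`[n] \ {s}` of `ζ_{(r,s)}`: it is `ζ_{(p,s)}`. Otherwise `ζ_{(r,s)}` sends `q` to a point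
hit by no other point, so the product misses it as well as `s`, and its image has only
`n - 2` elements.
-/

/-- The semigroup `𝒪ₙ` of order-preserving singular (non-bijective) selfmaps of
`[n] = {1, …, n}`, encoded as maps `Fin n → Fin n`.  Composition is applied
left to right: `(f * g) x = g (f x)`. -/
def OrderSing (n : ℕ) : Type :=
  {f : Fin n → Fin n // Monotone f ∧ ¬ Function.Bijective f}

instance (n : ℕ) : Semigroup (OrderSing n) where
  mul f g := ⟨g.1 ∘ f.1, g.2.1.comp f.2.1, fun h =>
    f.2.2 ((Finite.injective_iff_bijective).mp (Function.Injective.of_comp h.1))⟩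
  mul_assoc _ _ _ := rfl

/-- `f` is the element `ζ_{(i, k)}` of `𝒪ₙ` (for `i ∈ [n-1]`, `k ∈ [n]`, 1-indexed):
the unique non-singleton kernel class of `f` is `{i, i+1}` and the image of `f` is
`[n] \ {k}`.  Here `Fin n` is identified with `[n] = {1, …, n}` via `x ↦ (x : ℕ) + 1`. -/
def IsZeta {n : ℕ} (i k : ℕ) (f : OrderSing n) : Prop :=
  (∀ x y : Fin n, f.1 x = f.1 y ↔
      (x = y ∨ (((x : ℕ) + 1 = i ∨ (x : ℕ) + 1 = i + 1) ∧
                ((y : ℕ) + 1 = i ∨ (y : ℕ) + 1 = i + 1)))) ∧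
  Set.range f.1 = {y : Fin n | (y : ℕ) + 1 ≠ k}

theorem Monotone.le_of_apply_eq_apply_iff_of_mem_range {α β : Type*} [LinearOrder α]
    [Preorder β] {f g : α → β} (hf : Monotone f) (hker : ∀ x y, f x = f y ↔ g x = g y)
    {x : α} (hbelow : ∀ y < x, f y = g y) (hmem : g x ∈ Set.range f) : f x ≤ g x := by
  obtain ⟨z, hz⟩ := hmem
  rcases lt_or_ge z x with hzx | hxz
  · have hfzx : f z = f x := (hker z x).2 ((hbelow z hzx).symm.trans hz)
    exact (hfzx.symm.trans hz).le
  · exact hz ▸ hf hxz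

theorem Monotone.eq_of_apply_eq_apply_iff_of_range_eq {α β : Type*} [LinearOrder α]
    [WellFoundedLT α] [PartialOrder β] {f g : α → β} (hf : Monotone f) (hg : Monotone g)
    (hker : ∀ x y, f x = f y ↔ g x = g y) (hrange : Set.range f = Set.range g) : f = g := by
  funext x
  induction x using WellFoundedLT.induction with
  | _ x ih =>
    refine le_antisymm ?_ ?_
    · exact hf.le_of_apply_eq_apply_iff_of_mem_range hker ih (hrange ▸ Set.mem_range_self x)
    · exact hg.le_of_apply_eq_apply_iff_of_mem_range (fun x y => (hker x y).symm)
        (fun y hy => (ih y hy).symm) (hrange ▸ Set.mem_range_self x)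

theorem Set.image_compl_singleton_of_apply_eq {α β : Type*} {g : α → β} {a b : α}
    (hba : b ≠ a) (h : g b = g a) : g '' {a}ᶜ = Set.range g := by
  refine (Set.image_subset_range g _).antisymm ?_
  rintro _ ⟨c, rfl⟩
  by_cases hca : c = a
  · exact ⟨b, hba, hca ▸ h⟩
  · exact ⟨c, hca, rfl⟩

theorem Set.image_compl_singleton_of_fiber_subsingleton {α β : Type*} {g : α → β} {a : α}
    (h : ∀ b, g b = g a → b = a) : g '' {a}ᶜ = Set.range g \ {g a} := by
  ext y
  constructor
  · rintro ⟨b, hba, rfl⟩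
    exact ⟨⟨b, rfl⟩, fun hb => hba (h b hb)⟩
  · rintro ⟨⟨b, rfl⟩, hb⟩
    exact ⟨b, fun hba => hb (congrArg g hba), rfl⟩

theorem Fin.ncard_compl_singleton {n : ℕ} (a : Fin n) :
    ({a}ᶜ : Set (Fin n)).ncard = n - 1 := by
  rw [Set.ncard_compl, Set.ncard_singleton, Nat.card_eq_fintype_card, Fintype.card_fin]

theorem Fin.setOf_val_add_one_ne {n k : ℕ} (hk : 1 ≤ k ∧ k ≤ n) :
    {y : Fin n | (y : ℕ) + 1 ≠ k} = {⟨k - 1, by omega⟩}ᶜ := by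
  ext y
  simp only [Set.mem_ofPred_eq, Set.mem_compl_iff, Set.mem_singleton_iff, Fin.ext_iff]
  omega

namespace IsZeta

variable {n i k : ℕ} {f : OrderSing n}

theorem range_eq (hf : IsZeta i k f) (hk : 1 ≤ k ∧ k ≤ n) :
    Set.range f.1 = {⟨k - 1, by omega⟩}ᶜ :=
  hf.2.trans (Fin.setOf_val_add_one_ne hk)

theorem apply_ne (hf : IsZeta i k f) (x : Fin n) : (f.1 x : ℕ) + 1 ≠ k := by
  have hx : f.1 x ∈ Set.range f.1 := Set.mem_range_self x
  rwa [hf.2] at hx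

theorem exists_ne_apply_eq (hf : IsZeta i k f) (hi : 1 ≤ i ∧ i ≤ n - 1) {q : ℕ}
    (hq : 1 ≤ q ∧ q ≤ n) (hqi : q = i ∨ q = i + 1) :
    ∃ b, b ≠ (⟨q - 1, by omega⟩ : Fin n) ∧ f.1 b = f.1 ⟨q - 1, by omega⟩ := by
  rcases hqi with rfl | rfl
  · exact ⟨⟨q, by omega⟩, by simp only [ne_eq, Fin.ext_iff]; omega,
      (hf.1 _ _).2 (Or.inr (by simp only [or_true, true_and]; omega))⟩
  · exact ⟨⟨i - 1, by omega⟩, by simp only [ne_eq, Fin.ext_iff]; omega,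
      (hf.1 _ _).2 (Or.inr (by simp only; omega))⟩

theorem eq_of_apply_eq_apply (hf : IsZeta i k f) {q : ℕ} (hq : 1 ≤ q ∧ q ≤ n)
    (hqi : ¬(q = i ∨ q = i + 1)) (b : Fin n) (hb : f.1 b = f.1 ⟨q - 1, by omega⟩) :
    b = ⟨q - 1, by omega⟩ := by
  rcases (hf.1 _ _).1 hb with h | ⟨-, h⟩
  · exact h
  · simp only at h
    omega

theorem apply_eq_apply_iff_of_ne (hf : IsZeta i k f) {q : ℕ} (hqi : q = i ∨ q = i + 1)
    {u v : Fin n} (hu : (u : ℕ) + 1 ≠ q) (hv : (v : ℕ) + 1 ≠ q) : f.1 u = f.1 v ↔ u = v := by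
  refine ⟨fun h => ?_, congrArg f.1⟩
  rcases (hf.1 u v).1 h with huv | ⟨hu', hv'⟩
  · exact huv
  · exact Fin.ext (by omega)

theorem mul_eq {p q r s : ℕ} {g h : OrderSing n} (hpq : IsZeta p q f) (hrs : IsZeta r s g)
    (hps : IsZeta p s h) (hr : 1 ≤ r ∧ r ≤ n - 1) (hq : 1 ≤ q ∧ q ≤ n)
    (hqr : q = r ∨ q = r + 1) : f * g = h := by
  refine Subtype.ext (Monotone.eq_of_apply_eq_apply_iff_of_range_eq (g.2.1.comp f.2.1) h.2.1
    (fun x y => ?_) ?_)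
  · change g.1 (f.1 x) = g.1 (f.1 y) ↔ _
    rw [hrs.apply_eq_apply_iff_of_ne hqr (hpq.apply_ne x) (hpq.apply_ne y), hpq.1, hps.1]
  · obtain ⟨b, hb, hgb⟩ := hrs.exists_ne_apply_eq hr hq hqr
    change Set.range (g.1 ∘ f.1) = _
    rw [Set.range_comp, hpq.range_eq hq, Set.image_compl_singleton_of_apply_eq hb hgb, hrs.2,
      hps.2]

end IsZeta

theorem zeta_mul_mem_J_iff_general (n : ℕ) (p r q s : ℕ)
    (hr : 1 ≤ r ∧ r ≤ n - 1)
    (hq : 1 ≤ q ∧ q ≤ n) (hs : 1 ≤ s ∧ s ≤ n)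
    (fpq frs fps : OrderSing n)
    (hpq : IsZeta p q fpq) (hrs : IsZeta r s frs) (hps : IsZeta p s fps) :
    ((Set.range (fpq * frs).1).ncard = n - 1 ↔ (q = r ∨ q = r + 1)) ∧
    ((q = r ∨ q = r + 1) → fpq * frs = fps) := by
  by_cases hqr : q = r ∨ q = r + 1
  · have hmul : fpq * frs = fps := hpq.mul_eq hrs hps hr hq hqr
    refine ⟨iff_of_true ?_ hqr, fun _ => hmul⟩
    rw [hmul, hps.range_eq hs, Fin.ncard_compl_singleton]
  · refine ⟨iff_of_false ?_ hqr, fun h => absurd h hqr⟩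
    have hrange : Set.range (fpq * frs).1 = frs.1 '' {⟨q - 1, by omega⟩}ᶜ := by
      rw [← hpq.range_eq hq, ← Set.range_comp]
      rfl
    have hmem : frs.1 ⟨q - 1, by omega⟩ ∈ ({⟨s - 1, by omega⟩}ᶜ : Set (Fin n)) :=
      hrs.range_eq hs ▸ Set.mem_range_self _
    rw [hrange,
      Set.image_compl_singleton_of_fiber_subsingleton (hrs.eq_of_apply_eq_apply hq hqr),
      hrs.range_eq hs, Set.ncard_sdiff_singleton_of_mem hmem, Fin.ncard_compl_singleton]
    omega

/-- For `n ≥ 3`, `p, r ∈ [n - 1]` and `q, s ∈ [n]`, the product `ζ_{(p,q)} ζ_{(r,s)}`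
lies in `J_{n-1}` (its image has cardinality `n - 1`) if and only if `q ∈ {r, r + 1}`;
and in that case `ζ_{(p,q)} ζ_{(r,s)} = ζ_{(p,s)}`. -/
theorem zeta_mul_mem_J_iff (n : ℕ) (hn : 3 ≤ n) (p r q s : ℕ)
    (hp : 1 ≤ p ∧ p ≤ n - 1) (hr : 1 ≤ r ∧ r ≤ n - 1)
    (hq : 1 ≤ q ∧ q ≤ n) (hs : 1 ≤ s ∧ s ≤ n)
    (fpq frs fps : OrderSing n)
    (hpq : IsZeta p q fpq) (hrs : IsZeta r s frs) (hps : IsZeta p s fps) :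
    ((Set.range (fpq * frs).1).ncard = n - 1 ↔ (q = r ∨ q = r + 1)) ∧
    ((q = r ∨ q = r + 1) → fpq * frs = fps) :=
  zeta_mul_mem_J_iff_general n p r q s hr hq hs fpq frs fps hpq hrs hps
end

section
/- Let n ≥ 3, p ∈ [n − 1], q ∈ [n], and j ∈ [n − 1]. Then ζ_{(p, q)} = ζ_{(p, j)} ζ_{(j, q)} if q > j, and ζ_{(p, q)} = ζ_{(p, j+1)} ζ_{(j, q)} if q ≤ j. -/
/-!
The factor `ζ_{(j,q)}` identifies only the points `j` and `j + 1`, and the image of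
`ζ_{(p,m)}` misses one of them when `m ∈ {j, j + 1}`. Hence `ζ_{(j,q)}` is injective on the
image of `ζ_{(p,m)}`, so the product `ζ_{(p,m)} ζ_{(j,q)}` has the kernel of `ζ_{(p,m)}`, and
its image is that of `ζ_{(j,q)}`, namely `[n] \ {q}`. These are the kernel and image of
`ζ_{(p,q)}`, and an order-preserving map is determined by its kernel and its image. In
particular both factorisations hold for every `q`.
-/

section Monotone

variable {α β : Type*} [LinearOrder α] [PartialOrder β] {F G : α → β}

lemma Monotone.le_of_ker_iff_of_range_subset (hF : Monotone F)
    (hker : ∀ x y, F x = F y ↔ G x = G y) (hrange : Set.range G ⊆ Set.range F) {x : α}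
    (hlt : ∀ y < x, F y = G y) : F x ≤ G x := by
  obtain ⟨t, ht⟩ := hrange (Set.mem_range_self x)
  rcases lt_or_ge t x with htx | hxt
  · have hFt : F t = F x := (hker t x).mpr ((hlt t htx).symm.trans ht)
    rw [← hFt, ht]
  · exact ht ▸ hF hxt

theorem Monotone.eq_of_ker_iff_of_range_eq [WellFoundedLT α] (hF : Monotone F) (hG : Monotone G)
    (hker : ∀ x y, F x = F y ↔ G x = G y) (hrange : Set.range F = Set.range G) : F = G := by
  funext x
  induction x using WellFoundedLT.induction with
  | _ x ih =>
    exact le_antisymm (hF.le_of_ker_iff_of_range_subset hker hrange.ge ih)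
      (hG.le_of_ker_iff_of_range_subset (fun x y => (hker x y).symm) hrange.le
        fun y hy => (ih y hy).symm)

end Monotone

lemma Set.image_compl_singleton_eq_range {α β : Type*} {f : α → β} {a b : α} (hab : a ≠ b)
    (h : f a = f b) : f '' {a}ᶜ = Set.range f := by
  refine (Set.image_subset_range f _).antisymm ?_
  rintro _ ⟨x, rfl⟩
  by_cases hx : x = a
  · exact ⟨b, hab.symm, hx ▸ h.symm⟩
  · exact ⟨x, hx, rfl⟩

namespace OrderSing

variable {n : ℕ}

lemma not_injective (f : OrderSing n) : ¬ Function.Injective f.1 :=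
  fun h => f.2.2 (Finite.injective_iff_bijective.mp h)

lemma not_surjective (f : OrderSing n) : ¬ Function.Surjective f.1 :=
  fun h => f.2.2 (Finite.surjective_iff_bijective.mp h)

lemma val_mul (f g : OrderSing n) : (f * g).1 = g.1 ∘ f.1 := rfl

end OrderSing

namespace IsZeta

variable {n i k : ℕ} {f : OrderSing n}

lemma exists_collapsed_pair (hf : IsZeta i k f) :
    ∃ a b : Fin n, (a : ℕ) + 1 = i ∧ (b : ℕ) = i ∧ f.1 a = f.1 b := by
  obtain ⟨x, y, hxy, hne⟩ := Function.not_injective_iff.mp f.not_injective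
  have hpair := (hf.1 x y).mp hxy
  rcases lt_or_gt_of_ne (Fin.val_ne_of_ne hne) with hlt | hgt
  · exact ⟨x, y, by omega, by omega, hxy⟩
  · exact ⟨y, x, by omega, by omega, hxy.symm⟩

lemma exists_range_eq_compl (hf : IsZeta i k f) :
    ∃ c : Fin n, (c : ℕ) + 1 = k ∧ Set.range f.1 = {c}ᶜ := by
  obtain ⟨c, hc⟩ : ∃ c, c ∉ Set.range f.1 := not_forall.mp f.not_surjective
  have hck : (c : ℕ) + 1 = k := by
    simpa [hf.2] using hc
  refine ⟨c, hck, ?_⟩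
  ext y
  simp only [hf.2, Set.mem_ofPred_eq, Set.mem_compl_iff, Set.mem_singleton_iff, Fin.ext_iff]
  omega

lemma injOn_compl (hf : IsZeta i k f) {c : Fin n} (hc : (c : ℕ) + 1 = i ∨ (c : ℕ) = i) :
    Set.InjOn f.1 {c}ᶜ := by
  intro x hx y hy hxy
  simp only [Set.mem_compl_iff, Set.mem_singleton_iff, Fin.ext_iff] at hx hy
  rcases (hf.1 x y).mp hxy with h | h
  · exact h
  · exact Fin.ext (by omega)

lemma image_compl (hf : IsZeta i k f) {c : Fin n} (hc : (c : ℕ) + 1 = i ∨ (c : ℕ) = i) :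
    f.1 '' {c}ᶜ = Set.range f.1 := by
  obtain ⟨a, b, ha, hb, hab⟩ := hf.exists_collapsed_pair
  have hne : a ≠ b := Fin.ne_of_val_ne (by omega)
  rcases hc with hc | hc
  · obtain rfl : c = a := Fin.ext (by omega)
    exact Set.image_compl_singleton_eq_range hne hab
  · obtain rfl : c = b := Fin.ext (by omega)
    exact Set.image_compl_singleton_eq_range hne.symm hab.symm

theorem eq_mul {p q j m : ℕ} {g h : OrderSing n} (hf : IsZeta p q f) (hm : m = j ∨ m = j + 1)
    (hg : IsZeta p m g) (hh : IsZeta j q h) : f = g * h := by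
  obtain ⟨c, hcm, hgc⟩ := hg.exists_range_eq_compl
  have hcj : (c : ℕ) + 1 = j ∨ (c : ℕ) = j := by omega
  have hinj : Set.InjOn h.1 (Set.range g.1) := hgc ▸ hh.injOn_compl hcj
  apply Subtype.ext
  rw [OrderSing.val_mul]
  refine f.2.1.eq_of_ker_iff_of_range_eq (h.2.1.comp g.2.1) (fun x y => ?_) ?_
  · rw [Function.comp_apply, Function.comp_apply,
      hinj.eq_iff (Set.mem_range_self x) (Set.mem_range_self y)]
    exact (hf.1 x y).trans (hg.1 x y).symm
  · rw [Set.range_comp, hgc, hh.image_compl hcj, hf.2, hh.2]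

end IsZeta

theorem zeta_decomposition_general (n : ℕ) (p q j : ℕ)
    (fpq fpj fpj1 fjq : OrderSing n)
    (hpq : IsZeta p q fpq) (hpj : IsZeta p j fpj)
    (hpj1 : IsZeta p (j + 1) fpj1) (hjq : IsZeta j q fjq) :
    (j < q → fpq = fpj * fjq) ∧ (q ≤ j → fpq = fpj1 * fjq) :=
  ⟨fun _ => hpq.eq_mul (.inl rfl) hpj hjq, fun _ => hpq.eq_mul (.inr rfl) hpj1 hjq⟩

/-- For `n ≥ 3`, `p ∈ [n - 1]`, `q ∈ [n]` and `j ∈ [n - 1]`: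
`ζ_{(p,q)} = ζ_{(p,j)} ζ_{(j,q)}` if `q > j`, and
`ζ_{(p,q)} = ζ_{(p,j+1)} ζ_{(j,q)}` if `q ≤ j`. -/
theorem zeta_decomposition (n : ℕ) (hn : 3 ≤ n) (p q j : ℕ)
    (hp : 1 ≤ p ∧ p ≤ n - 1) (hq : 1 ≤ q ∧ q ≤ n) (hj : 1 ≤ j ∧ j ≤ n - 1)
    (fpq fpj fpj1 fjq : OrderSing n)
    (hpq : IsZeta p q fpq) (hpj : IsZeta p j fpj)
    (hpj1 : IsZeta p (j + 1) fpj1) (hjq : IsZeta j q fjq) :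
    (j < q → fpq = fpj * fjq) ∧ (q ≤ j → fpq = fpj1 * fjq) :=
  zeta_decomposition_general n p q j fpq fpj fpj1 fjq hpq hpj hpj1 hjq
end

section
/- For n ≥ 3 and 1 ≤ r ≤ n − 2, every element α of J_r can be written as α = βδ for some β, δ ∈ J_{r+1} in the semigroup 𝒪_n. -/
/-!
Let `A = im α`, so `|A| = r < n`. Factor `α = g ∘ π` where `π : [n] → [r+1]` is a monotone
surjection refining the kernel of `α`: it is the rank map `[n] → [r]` of `α` with one of its
non-singleton fibres (which exists as `r < n`) split in two. Pick `e ∉ A`. Then `β` is `π`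
followed by the order embedding `[r+1] → [r+2] ⊆ [n]` that misses the position `p` of `e` among
the values of `g`, and `δ` sends `p` to `e` and agrees with `g` elsewhere. Both have `r + 1`
values, and `r + 1 < n` makes them singular.
-/

open Function Set

theorem Monotone.exists_eq_comp_surjective_fin {X Y : Type*} [Preorder X] [LinearOrder Y]
    [Finite X] {f : X → Y} (hf : Monotone f) {r : ℕ} (hr : (range f).ncard = r) :
    ∃ (ρ : X → Fin r) (ψ : Fin r → Y), Monotone ρ ∧ Surjective ρ ∧ Monotone ψ ∧ f = ψ ∘ ρ := by
  have : Fintype (range f) := Fintype.ofFinite _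
  let φ := Fintype.orderIsoFinOfCardEq (range f) (by rw [Fintype.card_eq_nat_card,
    Nat.card_coe_set_eq, hr])
  refine ⟨φ.symm ∘ rangeFactorization f, (↑) ∘ φ, φ.symm.monotone.comp fun _ _ h => hf h,
    φ.symm.surjective.comp rangeFactorization_surjective, Subtype.mono_coe _ |>.comp φ.monotone,
    ?_⟩
  ext x
  simp [rangeFactorization]

theorem Fin.exists_eq_predAbove_comp_of_not_injective {X : Type*} [LinearOrder X] {r : ℕ}
    {π : X → Fin r} (hπ : Monotone π) (hπs : Surjective π) (hπi : ¬ Injective π) :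
    ∃ (π' : X → Fin (r + 1)) (c : Fin r), Monotone π' ∧ Surjective π' ∧ π = c.predAbove ∘ π' := by
  obtain ⟨x₀, y, hxy, hne⟩ : ∃ x₀ y, x₀ < y ∧ π x₀ = π y := by
    obtain ⟨a, b, hab, hne⟩ := not_injective_iff.mp hπi
    rcases lt_or_gt_of_ne hne with h | h
    exacts [⟨a, b, h, hab⟩, ⟨b, a, h, hab.symm⟩]
  refine ⟨fun x => if x ≤ x₀ then (π x).castSucc else (π x).succ, π x₀, ?_, ?_, ?_⟩
  · intro x x' h
    dsimp only
    split_ifs with h₁ h₂ h₂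
    · exact Fin.castSucc_le_castSucc_iff.mpr (hπ h)
    · exact (Fin.castSucc_le_castSucc_iff.mpr (hπ h)).trans (Fin.castSucc_le_succ _)
    · exact absurd (h.trans h₂) h₁
    · exact Fin.succ_le_succ_iff.mpr (hπ h)
  · intro j
    by_cases hj : j.val ≤ (π x₀).val
    · obtain ⟨x, hx⟩ := hπs ⟨j, by omega⟩
      by_cases h : x ≤ x₀
      · exact ⟨x, by simp [h, hx]⟩
      · have := Fin.le_def.mp (hπ (le_of_not_ge h))
        refine ⟨x₀, ?_⟩
        simp only [Fin.ext_iff, le_refl, ↓reduceIte, Fin.val_castSucc] at hx ⊢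
        omega
    · obtain ⟨x, hx⟩ := hπs ⟨j - 1, by omega⟩
      by_cases h : x ≤ x₀
      · have := Fin.le_def.mp (hπ h)
        refine ⟨y, ?_⟩
        simp only [Fin.ext_iff, not_le_of_gt hxy, ↓reduceIte, ← hne, Fin.val_succ] at hx ⊢
        omega
      · refine ⟨x, ?_⟩
        simp only [Fin.ext_iff, h, ↓reduceIte, Fin.val_succ] at hx ⊢
        omega
  · ext x : 1
    simp only [comp_apply]
    split_ifs with h
    · rw [Fin.predAbove_castSucc_of_le _ _ (hπ h)]
    · rw [Fin.predAbove_succ_of_le _ _ (hπ (le_of_not_ge h))]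

theorem Monotone.lt_iff_val_lt_card_filter {Y : Type*} [LinearOrder Y] {k : ℕ} {g : Fin k → Y}
    (hg : Monotone g) (e : Y) (i : Fin k) :
    g i < e ↔ i.val < (Finset.univ.filter fun j => g j < e).card := by
  constructor
  · intro hi
    have : Finset.Iic i ⊆ Finset.univ.filter fun j => g j < e := fun j hj => by
      simpa using (hg (Finset.mem_Iic.mp hj)).trans_lt hi
    simpa using Finset.card_le_card this
  · intro hi
    by_contra hi'
    have : (Finset.univ.filter fun j => g j < e) ⊆ Finset.Iio i := fun j hj => by
      rw [Finset.mem_filter] at hj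
      exact Finset.mem_Iio.mpr (hg.reflect_lt (hj.2.trans_le (not_lt.mp hi')))
    have := Finset.card_le_card this
    rw [Fin.card_Iio] at this
    omega

theorem Fin.exists_monotone_insertNth {Y : Type*} [LinearOrder Y] {k : ℕ} {g : Fin k → Y}
    (hg : Monotone g) (e : Y) :
    ∃ p : Fin (k + 1), Monotone (p.insertNth e g : Fin (k + 1) → Y) := by
  have hs : (Finset.univ.filter fun j => g j < e).card < k + 1 :=
    Nat.lt_succ_of_le ((Finset.card_le_univ _).trans_eq (Fintype.card_fin k))
  set p : Fin (k + 1) := ⟨_, hs⟩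
  have hp : ∀ i, g i < e ↔ i.castSucc < p := hg.lt_iff_val_lt_card_filter e
  refine ⟨p, fun a b hab => ?_⟩
  rcases p.eq_self_or_eq_succAbove a with rfl | ⟨i, rfl⟩ <;>
    rcases p.eq_self_or_eq_succAbove b with rfl | ⟨j, rfl⟩
  · exact le_rfl
  · have : p < p.succAbove j := hab.lt_of_ne (p.succAbove_ne j).symm
    rw [Fin.insertNth_apply_same, Fin.insertNth_apply_succAbove]
    exact not_lt.mp ((hp j).not.mpr (not_lt.mpr ((Fin.lt_succAbove_iff_le_castSucc _ _).mp this)))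
  · have : p.succAbove i < p := hab.lt_of_ne (p.succAbove_ne i)
    rw [Fin.insertNth_apply_same, Fin.insertNth_apply_succAbove]
    exact ((hp i).mpr ((Fin.succAbove_lt_iff_castSucc_lt _ _).mp this)).le
  · simpa using hg (Fin.succAbove_le_succAbove_iff.mp hab)

theorem Monotone.exists_eq_comp_surjective_fin_succ {X Y : Type*} [LinearOrder X] [Finite X]
    [LinearOrder Y] {f : X → Y} (hf : Monotone f) {r : ℕ} (hr : (range f).ncard = r)
    (hrX : r < Nat.card X) :
    ∃ (π : X → Fin (r + 1)) (g : Fin (r + 1) → Y),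
      Monotone π ∧ Surjective π ∧ Monotone g ∧ f = g ∘ π := by
  obtain ⟨ρ, ψ, hρ, hρs, hψ, rfl⟩ := hf.exists_eq_comp_surjective_fin hr
  have hρi : ¬ Injective ρ := fun h =>
    hrX.not_ge (by simpa using Nat.card_le_card_of_injective ρ h)
  obtain ⟨π, c, hπ, hπs, rfl⟩ := Fin.exists_eq_predAbove_comp_of_not_injective hρ hρs hρi
  exact ⟨π, ψ ∘ c.predAbove, hπ, hπs, hψ.comp c.predAbove_right_monotone, rfl⟩

theorem mem_J_eq_mul_of_succ_general (n r : ℕ) (hn : 3 ≤ n) (hr2 : r ≤ n - 2)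
    (α : OrderSing n) (hα : (Set.range α.1).ncard = r) :
    ∃ β δ : OrderSing n, (Set.range β.1).ncard = r + 1 ∧
      (Set.range δ.1).ncard = r + 1 ∧ α = β * δ := by
  cases α with | mk f hf => ?_
  change (range f).ncard = r at hα
  have hrn : r + 2 ≤ n := by omega
  obtain ⟨π, g, hπ, hπs, hg, rfl⟩ :=
    hf.1.exists_eq_comp_surjective_fin_succ hα (by rw [Nat.card_fin]; omega)
  rw [hπs.range_comp] at hα
  obtain ⟨e, he⟩ : ∃ e, e ∉ range g := by
    by_contra! h
    rw [eq_univ_of_forall h, ncard_univ, Nat.card_fin] at hα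
    omega
  obtain ⟨p, hins⟩ := Fin.exists_monotone_insertNth hg e
  set ι : Fin (r + 1) → Fin n := Fin.castLE hrn ∘ p.succAbove
  set κ : Fin n → Fin (r + 2) := fun v => Fin.clamp v (r + 1)
  have hι : StrictMono ι := (Fin.strictMono_castLE hrn).comp (Fin.strictMono_succAbove p)
  have hκι : ∀ j, κ (Fin.castLE hrn j) = j := fun j => by
    ext; simp only [κ, Fin.clamp, Fin.val_castLE]; omega
  have hβ : (range (ι ∘ π)).ncard = r + 1 := by
    simp [hπs.range_comp, ncard_range_of_injective hι.injective]
  have hδ : (range (p.insertNth e g ∘ κ)).ncard = r + 1 := by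
    rw [Surjective.range_comp (fun j => ⟨_, hκι j⟩), Fin.range_insertNth]
    exact (ncard_insert_of_notMem he).trans (congrArg (· + 1) hα)
  have not_bijective : ∀ {h : Fin n → Fin n}, (range h).ncard = r + 1 → ¬ Bijective h :=
    fun hh hb => by
      rw [hb.2.range_eq, ncard_univ, Nat.card_fin] at hh
      omega
  refine ⟨⟨_, hι.monotone.comp hπ, not_bijective hβ⟩,
    ⟨_, hins.comp (Fin.clamp_monotone.comp Fin.val_strictMono.monotone), not_bijective hδ⟩,
    hβ, hδ, Subtype.ext (funext fun x => ?_)⟩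
  show g (π x) = (p.insertNth e g : Fin (r + 2) → Fin n) (κ (Fin.castLE hrn (p.succAbove (π x))))
  rw [hκι, Fin.insertNth_apply_succAbove]

/-- For `n ≥ 3` and `1 ≤ r ≤ n - 2`, every element `α` of
`J_r = {α ∈ 𝒪ₙ : |im α| = r}` can be written as `α = β δ` with `β, δ ∈ J_{r+1}`. -/
theorem mem_J_eq_mul_of_succ (n r : ℕ) (hn : 3 ≤ n) (hr1 : 1 ≤ r) (hr2 : r ≤ n - 2)
    (α : OrderSing n) (hα : (Set.range α.1).ncard = r) :
    ∃ β δ : OrderSing n, (Set.range β.1).ncard = r + 1 ∧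
      (Set.range δ.1).ncard = r + 1 ∧ α = β * δ :=
  mem_J_eq_mul_of_succ_general n r hn hr2 α hα
end

section
/- For n ≥ 3, every prime subset of the semigroup 𝒪_n contains at least n − 1 elements. -/
/-!
The elements of rank `n - 1` of `𝒪ₙ` are the maps `corankOne j k = k.succAbove ∘ j.predAbove`,
which identify `j` with `j + 1` and miss `k`. They generate `𝒪ₙ`: if `u` misses `c` and takes
the same value at `i` and `i + 1`, then `u = a * corankOne j c` where `a` separates `i` from
`i + 1`, so `a` has fewer flat steps than `u`. Hence a prime `U` contains some
`corankOne i k`. For every `j`, since `k.succAbove j ∈ {j, j + 1}`, we have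
`corankOne i (k.succAbove j) * corankOne j k = corankOne i k ∈ U`, so one of the two factors lies
in `U`; choosing one for each of the `n - 1` values of `j` gives pairwise distinct elements,
because `k.succAbove j ≠ k`.
-/

open Function

theorem IsPrimeSubset.exists_mem_of_closure_eq_top {M : Type*} [Mul M] {U S : Set M}
    (hU : IsPrimeSubset U) (hS : Subsemigroup.closure S = ⊤) : ∃ s ∈ S, s ∈ U := by
  obtain ⟨u, hu⟩ := hU.1
  have hu' : u ∈ Subsemigroup.closure S := hS ▸ Subsemigroup.mem_top u
  induction hu' using Subsemigroup.closure_induction with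
  | mem s hs => exact ⟨s, hs, hu⟩
  | mul a b _ _ iha ihb => exact (hU.2 a b hu).elim iha ihb

lemma Monotone.eq_id_of_bijective {α : Type*} [LinearOrder α] [WellFoundedLT α] {f : α → α}
    (hf : Monotone f) (hb : Bijective f) : f = id :=
  congrArg DFunLike.coe <|
    Subsingleton.elim ((hf.strictMono_of_injective hb.1).orderIsoOfSurjective f hb.2) (.refl α)

namespace Fin

variable {m n : ℕ}

def flatSteps {α : Type*} [DecidableEq α] (f : Fin (m + 1) → α) : Finset (Fin m) :=
  {i | f i.castSucc = f i.succ}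

@[simp]
lemma mem_flatSteps {α : Type*} [DecidableEq α] {f : Fin (m + 1) → α} {i : Fin m} :
    i ∈ flatSteps f ↔ f i.castSucc = f i.succ := by
  simp [flatSteps]

lemma flatSteps_comp_of_injective {α β : Type*} [DecidableEq α] [DecidableEq β] {g : α → β}
    (hg : Injective g) (f : Fin (m + 1) → α) : flatSteps (g ∘ f) = flatSteps f := by
  ext i
  simp [hg.eq_iff]

lemma _root_.Monotone.flatSteps_nonempty {α : Type*} [PartialOrder α] [DecidableEq α]
    {f : Fin (m + 1) → α} (hf : Monotone f) (hinj : ¬Injective f) : (flatSteps f).Nonempty := by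
  by_contra hempty
  refine hinj (strictMono_iff_lt_succ.2 fun i => (hf (castSucc_le_succ i)).lt_of_ne ?_).injective
  exact fun heq => hempty ⟨i, mem_flatSteps.2 heq⟩

def breakFlatStep (v : Fin (m + 1) → Fin n) (i : Fin m) (y : Fin (m + 1)) : Fin (n + 1) :=
  if y ≤ i.castSucc then (v y).castSucc else (v y).succ

lemma monotone_breakFlatStep {v : Fin (m + 1) → Fin n} (hv : Monotone v) (i : Fin m) :
    Monotone (breakFlatStep v i) := by
  intro y z hyz
  have := le_def.1 (hv hyz)
  rw [le_def] at hyz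
  simp only [breakFlatStep]
  split_ifs with hy hz <;> simp only [le_def, val_castSucc, val_succ] at * <;> omega

lemma predAbove_comp_breakFlatStep {v : Fin (m + 1) → Fin n} (hv : Monotone v) {i : Fin m}
    (hi : i ∈ flatSteps v) : (v i.castSucc).predAbove ∘ breakFlatStep v i = v := by
  rw [mem_flatSteps] at hi
  funext y
  simp only [comp_apply, breakFlatStep]
  split_ifs with hy
  · exact predAbove_castSucc_of_le _ _ (hv hy)
  · exact predAbove_succ_of_le _ _ (hi ▸ hv (castSucc_lt_iff_succ_le.1 (not_le.1 hy)))

lemma flatSteps_breakFlatStep_ssubset {v : Fin (m + 1) → Fin n} {i : Fin m}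
    (hi : i ∈ flatSteps v) : flatSteps (breakFlatStep v i) ⊂ flatSteps v := by
  rw [mem_flatSteps] at hi
  refine Finset.ssubset_iff_of_subset ?_ |>.2 ⟨i, ?_, ?_⟩
  · intro y hy
    rw [mem_flatSteps] at hy ⊢
    simp only [breakFlatStep] at hy
    split_ifs at hy with hy₁ hy₂ hy₂
    · exact castSucc_injective _ hy
    · obtain rfl : y = i := by simp only [le_def, val_castSucc, val_succ] at hy₁ hy₂; omega
      exact absurd (hi ▸ hy) castSucc_lt_succ.ne
    · exact absurd ((castSucc_le_succ y).trans hy₂) hy₁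
    · exact succ_injective _ hy
  · simpa using hi
  · simp [breakFlatStep, hi, Fin.ext_iff]

lemma _root_.Monotone.exists_succAbove_comp_eq {α : Type*} [Preorder α] {f : α → Fin (m + 1)}
    (hf : Monotone f) {c : Fin (m + 1)} (hc : ∀ x, f x ≠ c) :
    ∃ v : α → Fin m, Monotone v ∧ c.succAbove ∘ v = f :=
  ⟨fun x => (finSuccAboveOrderIso c).symm ⟨f x, hc x⟩,
    fun _ _ hxy => (finSuccAboveOrderIso c).symm.monotone (hf hxy),
    funext fun _ => congrArg Subtype.val ((finSuccAboveOrderIso c).apply_symm_apply _)⟩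

lemma succAbove_eq_castSucc_or_succ (k : Fin (m + 1)) (j : Fin m) :
    k.succAbove j = j.castSucc ∨ k.succAbove j = j.succ := by
  unfold succAbove
  split_ifs <;> simp

lemma predAbove_succAbove_of_eq_castSucc_or_succ {j : Fin m} {k : Fin (m + 1)}
    (hk : k = j.castSucc ∨ k = j.succ) (y : Fin m) : j.predAbove (k.succAbove y) = y := by
  rcases hk with rfl | rfl
  · exact predAbove_succAbove j y
  · rcases le_or_gt y j with h | h
    · rw [succAbove_of_castSucc_lt _ _ (castSucc_lt_succ_iff.2 h), predAbove_castSucc_of_le _ _ h]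
    · rw [succAbove_of_le_castSucc _ _ (succ_le_castSucc_iff.2 h), predAbove_succ_of_le _ _ h.le]

end Fin

namespace OrderSing

variable {m n : ℕ}

instance : Finite (OrderSing n) :=
  inferInstanceAs (Finite {f : Fin n → Fin n // Monotone f ∧ ¬Bijective f})

def corankOne (j : Fin m) (k : Fin (m + 1)) : OrderSing (m + 1) :=
  ⟨k.succAbove ∘ j.predAbove,
    (Fin.strictMono_succAbove k).monotone.comp j.predAbove_right_monotone,
    fun h => (h.2 k).elim fun _ hx => Fin.succAbove_ne k _ hx⟩

lemma corankOne_inj {i j : Fin m} {k l : Fin (m + 1)} :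
    corankOne i k = corankOne j l ↔ i = j ∧ k = l := by
  refine ⟨fun h => ?_, fun ⟨hij, hkl⟩ => hij ▸ hkl ▸ rfl⟩
  have hfun : k.succAbove ∘ i.predAbove = l.succAbove ∘ j.predAbove := congrArg Subtype.val h
  have hkl : k = l := by
    have hrange := congrArg Set.range hfun
    rwa [(Fin.predAbove_surjective i).range_comp, (Fin.predAbove_surjective j).range_comp,
      Fin.range_succAbove, Fin.range_succAbove, compl_inj_iff, Set.singleton_eq_singleton_iff]
      at hrange
  subst hkl
  exact ⟨Fin.predAbove_left_inj.1 (Fin.succAbove_right_injective.comp_left hfun), rfl⟩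

lemma corankOne_mul_corankOne {i j : Fin m} {k : Fin (m + 1)} (hk : k = j.castSucc ∨ k = j.succ)
    (l : Fin (m + 1)) : corankOne i k * corankOne j l = corankOne i l :=
  Subtype.ext <| funext fun _ =>
    congrArg l.succAbove (Fin.predAbove_succAbove_of_eq_castSucc_or_succ hk _)

lemma exists_eq_corankOne_or_eq_mul_corankOne (u : OrderSing (m + 1)) :
    ∃ j c, u = corankOne j c ∨ ∃ a : OrderSing (m + 1),
      u = a * corankOne j c ∧ (Fin.flatSteps a.1).card < (Fin.flatSteps u.1).card := by
  obtain ⟨hmono, hbij⟩ := u.2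
  obtain ⟨c, hc⟩ : ∃ c, ∀ x, u.1 x ≠ c := by
    simpa [Surjective] using fun hs => hbij (Finite.surjective_iff_bijective.1 hs)
  obtain ⟨v, hv, huv⟩ := hmono.exists_succAbove_comp_eq hc
  obtain ⟨i, hi⟩ :=
    hmono.flatSteps_nonempty fun hinj => hbij (Finite.injective_iff_bijective.1 hinj)
  rw [← huv, Fin.flatSteps_comp_of_injective Fin.succAbove_right_injective] at hi
  have hu : u.1 = (corankOne (v i.castSucc) c).1 ∘ Fin.breakFlatStep v i := by
    rw [corankOne, comp_assoc, Fin.predAbove_comp_breakFlatStep hv hi, huv]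
  refine ⟨v i.castSucc, c, ?_⟩
  by_cases ha : Bijective (Fin.breakFlatStep v i)
  · rw [(Fin.monotone_breakFlatStep hv i).eq_id_of_bijective ha, comp_id] at hu
    exact .inl (Subtype.ext hu)
  · refine .inr ⟨⟨_, Fin.monotone_breakFlatStep hv i, ha⟩, Subtype.ext hu, ?_⟩
    rw [← huv, Fin.flatSteps_comp_of_injective Fin.succAbove_right_injective]
    exact Finset.card_lt_card (Fin.flatSteps_breakFlatStep_ssubset hi)

theorem closure_range_corankOne :
    Subsemigroup.closure (Set.range (uncurry (corankOne (m := m)))) = ⊤ := by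
  refine (Subsemigroup.eq_top_iff' _).2 fun u => ?_
  induction u using
    (measure fun u : OrderSing (m + 1) => (Fin.flatSteps u.1).card).wf.induction with
  | h u ih =>
  obtain ⟨j, c, rfl | ⟨a, rfl, ha⟩⟩ := exists_eq_corankOne_or_eq_mul_corankOne u
  · exact Subsemigroup.subset_closure ⟨(j, c), rfl⟩
  · exact mul_mem (ih a ha) (Subsemigroup.subset_closure ⟨(j, c), rfl⟩)

lemma _root_.IsPrimeSubset.corankOne_succAbove_mem {U : Set (OrderSing (m + 1))}
    (hU : IsPrimeSubset U) {i j : Fin m} {k : Fin (m + 1)} (hik : corankOne i k ∈ U)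
    (hjk : corankOne j k ∉ U) : corankOne i (k.succAbove j) ∈ U :=
  have hmul := corankOne_mul_corankOne (i := i) (Fin.succAbove_eq_castSucc_or_succ k j) k
  (hU.2 _ _ (hmul ▸ hik)).resolve_right hjk

end OrderSing

open OrderSing in
theorem orderSing_prime_subset_card_lower_bound_general (n : ℕ)
    (U : Set (OrderSing n)) (hU : IsPrimeSubset U) :
    n - 1 ≤ U.ncard := by
  cases n with
  | zero => exact Nat.zero_le _
  | succ m =>
  classical
  obtain ⟨_, ⟨⟨i, k⟩, rfl⟩, hik⟩ := hU.exists_mem_of_closure_eq_top closure_range_corankOne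
  let φ (j : Fin m) : OrderSing (m + 1) :=
    if corankOne j k ∈ U then corankOne j k else corankOne i (k.succAbove j)
  have hφU : ∀ j ∈ Set.univ, φ j ∈ U := fun j _ => by
    dsimp only [φ]
    split_ifs with hj
    exacts [hj, hU.corankOne_succAbove_mem hik hj]
  have hφ : Set.InjOn φ Set.univ := fun j _ j' _ h => by
    dsimp only [φ] at h
    split_ifs at h <;> simp_all [corankOne_inj, Fin.succAbove_ne, Fin.ne_succAbove]
  simpa using Set.ncard_le_ncard_of_injOn φ hφU hφ (Set.toFinite U)

/-- For `n ≥ 3`, every prime subset of the semigroup `𝒪ₙ` of order-preserving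
singular selfmaps of `[n]` contains at least `n - 1` elements. -/
theorem orderSing_prime_subset_card_lower_bound (n : ℕ) (hn : 3 ≤ n)
    (U : Set (OrderSing n)) (hU : IsPrimeSubset U) :
    n - 1 ≤ U.ncard :=
  orderSing_prime_subset_card_lower_bound_general n U hU
end

section
/- For n ≥ 3 and any fixed q ∈ [n], the set V = {ζ_{(i, q)} : i ∈ [n − 1]} is a prime subset of 𝒪_n of cardinality n − 1. -/
/-!
Every `ζ_{(i,q)}` has image `[n] \ {q}`. Conversely, an order-preserving map with image
`[n] \ {q}` has rank `n - 1`, so its kernel has a single non-singleton class, necessarily a pair,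
and by monotonicity a pair of neighbours `{i, i + 1}`; since an order-preserving map is determined
by its kernel and image, `V` is exactly the set of elements of `𝒪ₙ` with image `[n] \ {q}`.
This set is prime because `im (αβ) ⊆ im β` and a singular `β` cannot have image larger than
`[n] \ {q}`.
-/

open Set Function

def IdentifiesOnly {α β : Type*} (g : α → β) (x y : α) : Prop :=
  ∀ u v, g u = g v ↔ u = v ∨ ((u = x ∨ u = y) ∧ (v = x ∨ v = y))

theorem Set.ncard_compl_singleton_add_one {α : Type*} [Finite α] (a : α) :
    ({a}ᶜ : Set α).ncard + 1 = Nat.card α := by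
  simpa using ncard_compl_add_ncard ({a} : Set α)

theorem injOn_compl_singleton_of_ncard_range {α β : Type*} [Finite α] {g : α → β} {x y : α}
    (hxy : x ≠ y) (hg : g x = g y) (hcard : Nat.card α ≤ (range g).ncard + 1) :
    InjOn g {x}ᶜ := by
  have himage : g '' {x}ᶜ = range g := by
    refine (image_subset_range _ _).antisymm ?_
    rintro _ ⟨z, rfl⟩
    by_cases hz : z = x
    · exact ⟨y, hxy.symm, by rw [hz, hg]⟩
    · exact ⟨z, hz, rfl⟩
  refine injOn_of_ncard_image_eq (le_antisymm ncard_image_le ?_)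
  have := ncard_compl_singleton_add_one x
  rw [himage]
  omega

theorem identifiesOnly_of_ncard_range {α β : Type*} [Finite α] {g : α → β} {x y : α}
    (hxy : x ≠ y) (hg : g x = g y) (hcard : Nat.card α ≤ (range g).ncard + 1) :
    IdentifiesOnly g x y := by
  have hx := injOn_compl_singleton_of_ncard_range hxy hg hcard
  have hy := injOn_compl_singleton_of_ncard_range hxy.symm hg.symm hcard
  intro u v
  constructor
  · intro huv
    by_cases huv' : u = v
    · exact Or.inl huv'
    have hux : u = x ∨ v = x := by
      by_contra! h
      exact huv' (hx h.1 h.2 huv)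
    have huy : u = y ∨ v = y := by
      by_contra! h
      exact huv' (hy h.1 h.2 huv)
    grind
  · rintro (rfl | ⟨rfl | rfl, rfl | rfl⟩) <;> simp [hg]

theorem Monotone.eq_of_ker_eq_of_range_eq {α β : Type*} [LinearOrder α] [WellFoundedLT α]
    [LinearOrder β] {f g : α → β} (hf : Monotone f) (hg : Monotone g)
    (hker : Setoid.ker f = Setoid.ker g) (hrange : range f = range g) : f = g := by
  -- If `f x < g x` where `f, g` agree below `x`, write `f x = g w`: monotonicity of `g` forces
  -- `w < x`, so `f w = f x`, and the common kernel gives `g x = g w = f x`.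
  have key : ∀ {f g : α → β}, Monotone g → Setoid.ker f = Setoid.ker g → range f ⊆ range g →
      ∀ x, (∀ y < x, f y = g y) → ¬ f x < g x := by
    intro f g hg hker hsub x ih hlt
    obtain ⟨w, hw⟩ := hsub (mem_range_self x)
    have hwx : w < x := lt_of_not_ge fun hxw => (hg hxw).not_gt (hw ▸ hlt)
    have hgx : g x = g w := (Setoid.ext_iff.1 hker x w).1 (show f x = f w by rw [ih w hwx, hw])
    exact hlt.ne' (hgx.trans hw)
  funext x
  induction x using WellFoundedLT.induction with
  | _ x ih =>
    exact le_antisymm (not_lt.1 (key hf hker.symm hrange.ge x fun y hy => (ih y hy).symm))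
      (not_lt.1 (key hg hker hrange.le x ih))

theorem Monotone.exists_eq_succ_of_not_injective {m : ℕ} {β : Type*} [LinearOrder β]
    {g : Fin (m + 1) → β} (hg : Monotone g) (hinj : ¬ Injective g) :
    ∃ p : Fin m, g p.castSucc = g p.succ := by
  rw [← hg.strictMono_iff_injective, Fin.strictMono_iff_lt_succ] at hinj
  simp only [not_forall, not_lt] at hinj
  obtain ⟨p, hp⟩ := hinj
  exact ⟨p, (hg (Fin.castSucc_le_succ p)).antisymm hp⟩

namespace OrderSing

theorem not_injective_s14 {n : ℕ} (g : OrderSing n) : ¬ Injective g.1 :=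
  fun h => g.2.2 (Finite.injective_iff_bijective.1 h)

theorem not_surjective_s14 {n : ℕ} (g : OrderSing n) : ¬ Surjective g.1 :=
  fun h => g.2.2 (Finite.surjective_iff_bijective.1 h)

/-- `zeta p k` is `ζ_{(p+1, k+1)}`: `predAbove p` merges `p` with `p + 1`, then `succAbove k`
skips `k`. -/
def zeta {m : ℕ} (p : Fin m) (k : Fin (m + 1)) : OrderSing (m + 1) :=
  ⟨k.succAbove ∘ p.predAbove,
    (Fin.strictMono_succAbove k).monotone.comp p.predAbove_right_monotone,
    fun h => p.castSucc_lt_succ.ne (h.1 (by simp))⟩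

variable {m : ℕ}

theorem range_zeta (p : Fin m) (k : Fin (m + 1)) : range (zeta p k).1 = {k}ᶜ := by
  simp [zeta, range_comp, (Fin.predAbove_surjective p).range_eq]

theorem identifiesOnly_zeta (p : Fin m) (k : Fin (m + 1)) :
    IdentifiesOnly (zeta p k).1 p.castSucc p.succ :=
  identifiesOnly_of_ncard_range p.castSucc_lt_succ.ne (by simp [zeta])
    (by rw [range_zeta, ncard_compl_singleton_add_one])

theorem zeta_left_injective (k : Fin (m + 1)) : Injective (zeta · k) := fun _ _ h =>
  Fin.predAbove_left_injective ((Fin.succAbove_right_injective (p := k)).comp_left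
    (congrArg Subtype.val h))

theorem eq_zeta_of_identifiesOnly {g : OrderSing (m + 1)} {p : Fin m} {k : Fin (m + 1)}
    (hker : IdentifiesOnly g.1 p.castSucc p.succ) (hrange : range g.1 = {k}ᶜ) :
    g = zeta p k :=
  Subtype.ext <| g.2.1.eq_of_ker_eq_of_range_eq (zeta p k).2.1
    (Setoid.ext fun x y => (hker x y).trans (identifiesOnly_zeta p k x y).symm)
    (hrange.trans (range_zeta p k).symm)

theorem range_zeta_eq_setOf (k : Fin (m + 1)) :
    range (zeta · k) = {g : OrderSing (m + 1) | range g.1 = {k}ᶜ} := by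
  refine Subset.antisymm (range_subset_iff.2 fun p => range_zeta p k) fun g hg => ?_
  obtain ⟨p, hp⟩ := g.2.1.exists_eq_succ_of_not_injective g.not_injective_s14
  have hcard : Nat.card (Fin (m + 1)) ≤ (range g.1).ncard + 1 := by
    rw [show range g.1 = {k}ᶜ from hg, ncard_compl_singleton_add_one]
  exact ⟨p, (eq_zeta_of_identifiesOnly
    (identifiesOnly_of_ncard_range p.castSucc_lt_succ.ne hp hcard) hg).symm⟩

theorem ncard_range_zeta (k : Fin (m + 1)) : (range (zeta · k)).ncard = m := by
  rw [ncard_range_of_injective (zeta_left_injective k), Nat.card_eq_fintype_card,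
    Fintype.card_fin]

theorem isPrimeSubset_range_zeta (hm : 0 < m) (k : Fin (m + 1)) :
    IsPrimeSubset (range (zeta · k)) := by
  rw [range_zeta_eq_setOf]
  refine ⟨⟨zeta ⟨0, hm⟩ k, range_zeta _ k⟩, fun f g hfg => Or.inr ?_⟩
  have hsub : {k}ᶜ ⊆ range g.1 :=
    (show range (f * g).1 = {k}ᶜ from hfg) ▸ range_comp_subset_range f.1 g.1
  have hk : k ∉ range g.1 := fun hk =>
    g.not_surjective_s14 fun y => if hy : y = k then hy ▸ hk else hsub hy
  exact Subset.antisymm (fun y hy hyk => hk (hyk ▸ hy)) hsub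

theorem isZeta_iff {g : OrderSing (m + 1)} {p : Fin m} {k : Fin (m + 1)} :
    IsZeta (p + 1) (k + 1) g ↔ IdentifiesOnly g.1 p.castSucc p.succ ∧ range g.1 = {k}ᶜ := by
  have hrange : {y : Fin (m + 1) | (y : ℕ) + 1 ≠ k + 1} = {k}ᶜ := by
    ext
    simp [Fin.ext_iff]
  rw [IsZeta, hrange]
  refine and_congr (forall₂_congr fun x y => iff_congr Iff.rfl ?_) Iff.rfl
  simp only [Fin.ext_iff, Fin.val_castSucc, Fin.val_succ]
  omega

theorem setOf_isZeta_eq_range_zeta (k : Fin (m + 1)) :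
    {f : OrderSing (m + 1) | ∃ i : ℕ, 1 ≤ i ∧ i ≤ m ∧ IsZeta i (k + 1) f} = range (zeta · k) := by
  ext f
  constructor
  · rintro ⟨i, hi1, him, hf⟩
    obtain ⟨p, rfl⟩ : ∃ p : Fin m, i = p + 1 := ⟨⟨i - 1, by omega⟩, (Nat.sub_add_cancel hi1).symm⟩
    rw [isZeta_iff] at hf
    exact ⟨p, (eq_zeta_of_identifiesOnly hf.1 hf.2).symm⟩
  · rintro ⟨p, rfl⟩
    exact ⟨p + 1, by omega, p.isLt, isZeta_iff.2 ⟨identifiesOnly_zeta p k, range_zeta p k⟩⟩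

end OrderSing

/-- For `n ≥ 3` and any fixed `q ∈ [n]`, the set `V = {ζ_{(i,q)} : i ∈ [n - 1]}` is a
prime subset of `𝒪ₙ` of cardinality `n - 1`. -/
theorem zeta_set_isPrimeSubset (n : ℕ) (hn : 3 ≤ n) (q : ℕ) (hq : 1 ≤ q ∧ q ≤ n) :
    IsPrimeSubset {f : OrderSing n | ∃ i : ℕ, 1 ≤ i ∧ i ≤ n - 1 ∧ IsZeta i q f} ∧
    ({f : OrderSing n | ∃ i : ℕ, 1 ≤ i ∧ i ≤ n - 1 ∧ IsZeta i q f}).ncard = n - 1 := by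
  obtain ⟨m, rfl⟩ : ∃ m, n = m + 1 := ⟨n - 1, by omega⟩
  obtain ⟨k, rfl⟩ : ∃ k : Fin (m + 1), q = k + 1 := ⟨⟨q - 1, by omega⟩, (Nat.sub_add_cancel hq.1).symm⟩
  rw [Nat.add_sub_cancel, OrderSing.setOf_isZeta_eq_range_zeta]
  exact ⟨OrderSing.isPrimeSubset_range_zeta (by omega) k, OrderSing.ncard_range_zeta k⟩
end
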